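/- Let m ≥ 3 be an integer and let Z be the center of the dihedral Artin group G(m). If g ∈ G(m) with g ∉ Z, and z ∈ Z with z ≠ 1, then g and gz are not conjugate in G(m). -/

import Mathlib

/-!
Let `ε : G(m) → ℤ` send both generators to `1`. If `g` is conjugate to `g z`, then
`z = g⁻¹ (c g c⁻¹)` for some `c`, so `ε z = 0`. By Reidemeister–Schreier, the kernel of `ε` is
generated by `bᵢ = x₁ⁱ x₂ x₁⁻⁽ⁱ⁺¹⁾` (`i ∈ ℤ`), conjugation by `x₁` shifts `bᵢ ↦ bᵢ₊₁`, and the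
Artin relation becomes `b₁ b₃ ⋯ = b₀ b₂ ⋯` (indices below `m`). This relation expresses
`b_{m-1}` and `b₋₁` through `b₀, …, b_{m-2}`, so `G(m) ≅ F ⋊ ℤ`, where `F` is free on
`b₀, …, b_{m-2}` and `ℤ` acts by the shift. Under this isomorphism a central `z` with `ε z = 0`
is an element of `F` commuting with `b₀` and `b₁`, two distinct free generators since `m ≥ 3`;
hence `z = 1`.
-/

/-- The alternating product `xyxy⋯` with `m` factors, starting with `x`. -/
def altProd {G : Type*} [Monoid G] : ℕ → G → G → G
  | 0, _, _ => 1
  | m + 1, x, y => x * altProd m y x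

/-- The Artin relators associated to a Coxeter matrix `M` (with entries in `ℕ∞`):
for each pair `i ≠ j` with `M i j = m` finite, the relator `ₘ(xᵢ,xⱼ) ₘ(xⱼ,xᵢ)⁻¹`. -/
def artinRels {n : ℕ} (M : Fin n → Fin n → ℕ∞) : Set (FreeGroup (Fin n)) :=
  { r | ∃ (i j : Fin n) (m : ℕ), i ≠ j ∧ M i j = (m : ℕ∞) ∧
        r = altProd m (FreeGroup.of i) (FreeGroup.of j) *
            (altProd m (FreeGroup.of j) (FreeGroup.of i))⁻¹ }

/-- The Artin group defined by the Coxeter matrix `M`. -/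
abbrev ArtinGroup {n : ℕ} (M : Fin n → Fin n → ℕ∞) : Type := PresentedGroup (artinRels M)

/-- The standard generators of the Artin group. -/
def agen {n : ℕ} (M : Fin n → Fin n → ℕ∞) (i : Fin n) : ArtinGroup M :=
  PresentedGroup.of i

/-- `M` is a Coxeter matrix of extra-large type: symmetric, `1` on the diagonal,
and all off-diagonal entries at least `4` (possibly `∞`). -/
structure IsXLMatrix {n : ℕ} (M : Fin n → Fin n → ℕ∞) : Prop where
  symm : ∀ i j, M i j = M j i
  diag : ∀ i, M i i = 1
  large : ∀ i j, i ≠ j → 4 ≤ M i j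

/-- `M` is a Coxeter matrix of large type: symmetric, `1` on the diagonal,
and all off-diagonal entries at least `3` (possibly `∞`). -/
structure IsLargeMatrix {n : ℕ} (M : Fin n → Fin n → ℕ∞) : Prop where
  symm : ∀ i j, M i j = M j i
  diag : ∀ i, M i i = 1
  large : ∀ i j, i ≠ j → 3 ≤ M i j

/-- The element of a group represented by a word over `X ∪ X⁻¹`, where a word is a list
of pairs `(i, ε)` with `ε = true` for the generator `x i` and `ε = false` for its inverse. -/
def wordProd {G : Type*} [Group G] {α : Type*} (x : α → G) (w : List (α × Bool)) : G :=
  (w.map fun p => if p.2 then x p.1 else (x p.1)⁻¹).prod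

/-- The length `|g|` of `g`: the minimal length of a word over `X ∪ X⁻¹` representing `g`. -/
noncomputable def wlen {G : Type*} [Group G] {α : Type*} (x : α → G) (g : G) : ℕ :=
  sInf { k | ∃ w : List (α × Bool), w.length = k ∧ wordProd x w = g }

/-- A word is geodesic if its length equals the length of the element it represents. -/
def IsGeodesicWord {G : Type*} [Group G] {α : Type*} (x : α → G) (w : List (α × Bool)) :
    Prop :=
  w.length = wlen x (wordProd x w)

/-- An element `g` is cyclically reduced if `|a g a⁻¹| ≥ |g|` for every letter
`a ∈ X ∪ X⁻¹`. -/
def CyclicallyReduced {G : Type*} [Group G] {α : Type*} (x : α → G) (g : G) : Prop :=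
  ∀ p : α × Bool, wlen x g ≤ wlen x (wordProd x [p] * g * (wordProd x [p])⁻¹)

/-- `d` is a left divisor of `g`: `|d| + |d⁻¹g| = |g|`. -/
def IsLeftDivisor {G : Type*} [Group G] {α : Type*} (x : α → G) (d g : G) : Prop :=
  wlen x d + wlen x (d⁻¹ * g) = wlen x g

/-- `d` is a right divisor of `g`: `|gd⁻¹| + |d| = |g|`. -/
def IsRightDivisor {G : Type*} [Group G] {α : Type*} (x : α → G) (d g : G) : Prop :=
  wlen x (g * d⁻¹) + wlen x d = wlen x g

/-- The Coxeter matrix of the dihedral Artin group `G(m)`. -/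
def Mdih (m : ℕ) : Fin 2 → Fin 2 → ℕ∞ := fun i j => if i = j then 1 else (m : ℕ∞)

/-- The dihedral Artin group `G(m) = ⟨x₁,x₂ ∣ ₘ(x₁,x₂) = ₘ(x₂,x₁)⟩`. -/
abbrev DihedralArtinGroup (m : ℕ) : Type := ArtinGroup (Mdih m)

section AltProd

variable {M : Type*} [Monoid M]

theorem altProd_add_two (k : ℕ) (a b : M) : altProd (k + 2) a b = a * b * altProd k a b := by
  simp only [altProd, mul_assoc]

theorem altProd_two_mul (j : ℕ) (a b : M) : altProd (2 * j) a b = (a * b) ^ j := by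
  induction j with
  | zero => simp [altProd]
  | succ j ih => rw [Nat.mul_succ, altProd_add_two, ih, pow_succ']

theorem altProd_two_mul_add_one (j : ℕ) (a b : M) :
    altProd (2 * j + 1) a b = (a * b) ^ j * a := by
  induction j with
  | zero => simp [altProd]
  | succ j ih =>
    rw [Nat.mul_succ, add_right_comm, altProd_add_two, ih, pow_succ', mul_assoc, mul_assoc,
      mul_assoc]

theorem map_altProd {M' F : Type*} [Monoid M'] [FunLike F M M'] [MonoidHomClass F M M']
    (f : F) (k : ℕ) (a b : M) : f (altProd k a b) = altProd k (f a) (f b) := by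
  induction k generalizing a b with
  | zero => simp [altProd]
  | succ k ih => simp [altProd, ih]

end AltProd

namespace FreeGroup

variable {α : Type*} [DecidableEq α]

theorem getLast_toWord_of_commute {p : α × Bool} {w : FreeGroup α} (hw : w ≠ 1)
    (hcomm : Commute (mk [p]) w) (hhead : ∀ q ∈ w.toWord.head?, q.1 ≠ p.1) :
    w.toWord.getLast? = some (p.1, !p.2) := by
  obtain ⟨q, t, hqt⟩ := List.exists_cons_of_ne_nil (mt toWord_eq_nil_iff.1 hw)
  have hleft : (mk [p] * w).toWord = p :: w.toWord := by
    rw [toWord_mul, toWord_mk, reduce_singleton, List.singleton_append]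
    exact IsReduced.reduce_eq
      (List.isChain_cons.2 ⟨fun r hr h => absurd h.symm (hhead r hr), isReduced_toWord⟩)
  obtain ⟨r, hr⟩ : ∃ r, w.toWord.getLast? = some r :=
    Option.isSome_iff_exists.1 (by simp [hqt])
  suffices r.1 = p.1 ∧ r.2 ≠ p.2 by
    rw [hr, ← this.1, ← Bool.eq_not.2 this.2]
  by_contra hcancel
  have hred : IsReduced (w.toWord ++ [p]) := by
    refine List.isChain_append.2 ⟨isReduced_toWord, List.isChain_singleton p, ?_⟩
    rintro r' hr' p' hp' h1
    rw [Option.mem_def, hr, Option.some_inj] at hr'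
    rw [List.head?_singleton, Option.mem_some_iff] at hp'
    subst hr' hp'
    exact not_not.1 (not_and.1 hcancel h1)
  have h := hcomm.eq ▸ hleft
  rw [toWord_mul, toWord_mk, reduce_singleton, hred.reduce_eq, hqt] at h
  obtain ⟨rfl, -⟩ := List.cons.inj h
  exact hhead q (by simp [hqt]) rfl

theorem eq_one_of_commute_of_ne {a b : α} (hab : a ≠ b) {w : FreeGroup α}
    (ha : Commute (of a) w) (hb : Commute (of b) w) : w = 1 := by
  by_contra hw
  obtain ⟨q, t, hqt⟩ := List.exists_cons_of_ne_nil (mt toWord_eq_nil_iff.1 hw)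
  -- For a letter `k` that differs from the first letter of `w`, both `k w` and `k⁻¹ w` are
  -- reduced, so `w k = k w` and `w k⁻¹ = k⁻¹ w` force `w` to end both in `k⁻¹` and in `k`.
  obtain ⟨k, hk, hkq⟩ : ∃ k, Commute (of k) w ∧ k ≠ q.1 := by
    by_cases haq : a = q.1
    · exact ⟨b, hb, fun h => hab (haq.trans h.symm)⟩
    · exact ⟨a, ha, haq⟩
  have hhead : ∀ e : Bool, ∀ r ∈ w.toWord.head?, r.1 ≠ (k, e).1 := by
    simp [hqt, Ne.symm hkq]
  have hpos := getLast_toWord_of_commute hw hk (hhead true)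
  have hinv : (of k)⁻¹ = mk [(k, false)] := by rw [of, inv_mk]; rfl
  have hneg := getLast_toWord_of_commute hw (hinv ▸ hk.inv_left) (hhead false)
  simp [hpos] at hneg

end FreeGroup

section EvenProd

variable {M : Type*} [Monoid M]

def evenProd (s : ℕ → M) (j : ℕ) : M :=
  ((List.range j).map fun i => s (2 * i)).prod

theorem evenProd_zero (s : ℕ → M) : evenProd s 0 = 1 := rfl

theorem evenProd_succ (s : ℕ → M) (j : ℕ) : evenProd s (j + 1) = evenProd s j * s (2 * j) :=
  List.prod_range_succ _ j

theorem evenProd_succ' (s : ℕ → M) (j : ℕ) :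
    evenProd s (j + 1) = s 0 * evenProd (fun i => s (i + 2)) j :=
  List.prod_range_succ' _ j

theorem map_evenProd {M' F : Type*} [Monoid M'] [FunLike F M M'] [MonoidHomClass F M M']
    (f : F) (s : ℕ → M) (j : ℕ) : f (evenProd s j) = evenProd (fun i => f (s i)) j := by
  simp [evenProd, map_list_prod, Function.comp_def]

theorem evenProd_congr {s t : ℕ → M} {j : ℕ} (h : ∀ i < j, s (2 * i) = t (2 * i)) :
    evenProd s j = evenProd t j :=
  congrArg List.prod (List.map_congr_left fun i hi => h i (List.mem_range.1 hi))

end EvenProd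

/-- The relation `s 1 * s 3 * s 5 * ⋯ = s 0 * s 2 * s 4 * ⋯`, both sides running over the
indices below `m`. -/
def AltRel {M : Type*} [Monoid M] (m : ℕ) (s : ℕ → M) : Prop :=
  evenProd (fun i => s (i + 1)) (m / 2) = evenProd s ((m + 1) / 2)

section AltRel

variable {H : Type*} [Group H] {m : ℕ} {s t : ℕ → H}

theorem AltRel.map {F H' : Type*} [Group H'] [FunLike F H H'] [MonoidHomClass F H H']
    (hs : AltRel m s) (f : F) : AltRel m fun i => f (s i) := by
  rw [AltRel, ← map_evenProd, ← map_evenProd, hs]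

theorem altRel_congr (h : ∀ i < m, s i = t i) : AltRel m s ↔ AltRel m t := by
  rw [AltRel, AltRel,
    evenProd_congr (t := fun i => t (i + 1)) fun i hi => h (2 * i + 1) (by omega),
    evenProd_congr (t := t) fun i hi => h (2 * i) (by omega)]

theorem altRel_succ_iff_apply_zero (m : ℕ) (s : ℕ → H) :
    AltRel (m + 1) s ↔ s 0 = evenProd (fun i => s (i + 1)) ((m + 1) / 2) *
      (evenProd (fun i => s (i + 2)) (m / 2))⁻¹ := by
  rw [AltRel, show (m + 1 + 1) / 2 = m / 2 + 1 by omega, evenProd_succ', eq_mul_inv_iff_mul_eq,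
    eq_comm]

theorem AltRel.head_unique (hs : AltRel (m + 1) s) (ht : AltRel (m + 1) t)
    (h : ∀ i, 0 < i → i ≤ m → s i = t i) : s 0 = t 0 := by
  rw [altRel_succ_iff_apply_zero] at hs ht
  rw [hs, ht, evenProd_congr (j := (m + 1) / 2) (t := fun i => t (i + 1))
    fun i hi => h (2 * i + 1) (by omega) (by omega), evenProd_congr (j := m / 2)
    (t := fun i => t (i + 2)) fun i hi => h (2 * i + 2) (by omega) (by omega)]

theorem AltRel.last_unique (hs : AltRel (m + 1) s) (ht : AltRel (m + 1) t)
    (h : ∀ i < m, s i = t i) : s m = t m := by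
  have hodd : ∀ j, 2 * j ≤ m →
      evenProd (fun i => s (i + 1)) j = evenProd (fun i => t (i + 1)) j :=
    fun j hj => evenProd_congr fun i hi => h (2 * i + 1) (by omega)
  have heven : ∀ j, 2 * j ≤ m + 1 → evenProd s j = evenProd t j :=
    fun j hj => evenProd_congr fun i hi => h (2 * i) (by omega)
  obtain ⟨j, rfl | rfl⟩ := Nat.even_or_odd' m
  · rw [AltRel, show (2 * j + 1 + 1) / 2 = j + 1 by omega, show (2 * j + 1) / 2 = j by omega,
      evenProd_succ] at hs ht
    rw [← mul_right_inj (evenProd s j), ← hs, hodd j le_rfl, ht, heven j (by omega)]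
  · rw [AltRel, show (2 * j + 1 + 1) / 2 = j + 1 by omega,
      show (2 * j + 1 + 1 + 1) / 2 = j + 1 by omega, evenProd_succ] at hs ht
    rw [← mul_right_inj (evenProd (fun i => s (i + 1)) j), hs, heven (j + 1) (by omega), ← ht,
      hodd j (by omega)]

end AltRel

section SchreierGen

variable {G : Type*} [Group G]

def schreierGen (x y : G) (i : ℕ) : G := x ^ i * y * (x ^ (i + 1))⁻¹

variable (x y : G)

theorem schreierGen_succ (i : ℕ) : schreierGen x y (i + 1) = x * schreierGen x y i * x⁻¹ := by
  simp only [schreierGen, pow_succ', mul_inv_rev, mul_assoc]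

theorem map_schreierGen {G' F : Type*} [Group G'] [FunLike F G G'] [MonoidHomClass F G G']
    (f : F) (i : ℕ) : f (schreierGen x y i) = schreierGen (f x) (f y) i := by
  simp [schreierGen]

theorem schreierGen_mul_pow (i : ℕ) : schreierGen x y i * x ^ (i + 1) = x ^ i * y := by
  simp [schreierGen]

theorem mul_pow_eq_evenProd_mul (j : ℕ) :
    (y * x) ^ j = evenProd (schreierGen x y) j * x ^ (2 * j) := by
  induction j with
  | zero => simp [evenProd_zero]
  | succ j ih =>
    rw [pow_succ, ih, evenProd_succ, mul_assoc, mul_assoc, schreierGen]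
    group

theorem mul_pow_eq_evenProd_succ_mul (j : ℕ) :
    (x * y) ^ j = evenProd (fun i => schreierGen x y (i + 1)) j * x ^ (2 * j) := by
  induction j with
  | zero => simp [evenProd_zero]
  | succ j ih =>
    rw [pow_succ, ih, evenProd_succ, mul_assoc, mul_assoc, schreierGen]
    group

theorem altProd_comm_iff (m : ℕ) :
    altProd m x y = altProd m y x ↔ AltRel m (schreierGen x y) := by
  obtain ⟨j, rfl | rfl⟩ := Nat.even_or_odd' m
  · rw [altProd_two_mul, altProd_two_mul, mul_pow_eq_evenProd_mul x y,
      mul_pow_eq_evenProd_succ_mul x y, mul_left_inj, AltRel, show (2 * j + 1) / 2 = j by omega,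
      Nat.mul_div_cancel_left _ two_pos]
  · rw [altProd_two_mul_add_one, altProd_two_mul_add_one, mul_pow_eq_evenProd_mul x y,
      mul_pow_eq_evenProd_succ_mul x y, mul_assoc, ← pow_succ, mul_assoc,
      ← schreierGen_mul_pow x y (2 * j), ← mul_assoc, ← evenProd_succ, mul_left_inj, AltRel,
      show (2 * j + 1) / 2 = j by omega, show (2 * j + 1 + 1) / 2 = j + 1 by omega]

end SchreierGen

theorem map_eq_one_of_isConj_mul {G A : Type*} [Group G] [CommGroup A] (f : G →* A) {g z : G}
    (h : IsConj g (g * z)) : f z = 1 := by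
  obtain ⟨c, hc⟩ := isConj_iff.1 h
  simpa [mul_comm, mul_assoc] using (congrArg f hc).symm

theorem MonoidHom.map_zpow_apply {N G : Type*} [Group N] [Group G] (f : N →* G) {σ : MulAut N}
    {τ : MulAut G} (h : ∀ v, f (σ v) = τ (f v)) (k : ℤ) (v : N) :
    f ((σ ^ k) v) = (τ ^ k) (f v) := by
  induction k using Int.induction_on generalizing v with
  | zero => simp
  | succ k ih => rw [zpow_add_one, zpow_add_one, MulAut.mul_apply, ih, h]; rfl
  | pred k ih =>
    have hinv : f (σ⁻¹ v) = τ⁻¹ (f v) := by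
      rw [eq_comm, MulAut.inv_apply, MulEquiv.symm_apply_eq, ← h, MulAut.inv_apply,
        MulEquiv.apply_symm_apply]
    rw [zpow_sub_one, zpow_sub_one, MulAut.mul_apply, ih, hinv]; rfl

namespace SemidirectProduct

variable {N : Type*} [Group N] (θ : MulAut N)

theorem schreierGen_inr_one (u : N) (i : ℕ) :
    schreierGen (inr (Multiplicative.ofAdd 1))
        (inl u * inr (Multiplicative.ofAdd 1) : N ⋊[zpowersHom _ θ] Multiplicative ℤ) i =
      inl ((θ ^ i) u) := by
  have hpow : (inr (Multiplicative.ofAdd 1) : N ⋊[zpowersHom _ θ] Multiplicative ℤ) ^ i =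
      inr (Multiplicative.ofAdd (i : ℤ)) := by
    rw [← map_pow, ← ofAdd_nsmul, nsmul_one]
  simp only [schreierGen, pow_succ, mul_inv_rev, mul_assoc, mul_inv_cancel_left]
  rw [← mul_assoc, hpow, ← map_inv, ← inl_aut, zpowersHom_apply, toAdd_ofAdd, zpow_natCast]

end SemidirectProduct

namespace DihedralArtinGroup

section Presentation

variable (m : ℕ)

def x₁ : DihedralArtinGroup m := agen (Mdih m) 0

def x₂ : DihedralArtinGroup m := agen (Mdih m) 1

theorem altProd_x₁_x₂ : altProd m (x₁ m) (x₂ m) = altProd m (x₂ m) (x₁ m) := by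
  have h := PresentedGroup.mk_eq_mk_of_mul_inv_mem (rels := artinRels (Mdih m))
    ⟨0, 1, m, by decide, by simp [Mdih], rfl⟩
  rwa [map_altProd, map_altProd] at h

variable {m} {H : Type*} [Group H]

def lift (a b : H) (h : altProd m a b = altProd m b a) : DihedralArtinGroup m →* H :=
  PresentedGroup.toGroup (f := ![a, b]) <| by
    rintro r ⟨i, j, k, hij, hk, rfl⟩
    have hk : k = m := by simpa [Mdih, hij] using hk.symm
    subst hk
    rw [map_mul, map_inv, map_altProd, map_altProd, FreeGroup.lift_apply_of,
      FreeGroup.lift_apply_of, mul_inv_eq_one]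
    fin_cases i <;> fin_cases j <;> simp_all

theorem lift_x₁ (a b : H) (h : altProd m a b = altProd m b a) : lift a b h (x₁ m) = a :=
  PresentedGroup.toGroup.of _

theorem lift_x₂ (a b : H) (h : altProd m a b = altProd m b a) : lift a b h (x₂ m) = b :=
  PresentedGroup.toGroup.of _

theorem hom_ext {f g : DihedralArtinGroup m →* H} (h₁ : f (x₁ m) = g (x₁ m))
    (h₂ : f (x₂ m) = g (x₂ m)) : f = g :=
  PresentedGroup.ext fun i => by fin_cases i <;> assumption

end Presentation

variable (n : ℕ)

def freeGen (i : ℕ) : FreeGroup (Fin (n + 2)) := FreeGroup.of (Fin.ofNat (n + 2) i)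

theorem freeGen_val (v : Fin (n + 2)) : freeGen n v = FreeGroup.of v := by
  rw [freeGen, Fin.ofNat_val_eq_self]

-- `shift` sends `freeGen i` to `freeGen (i + 1)` for `i ≤ n` and `freeGen (n + 1)` to `shiftTop`;
-- `shiftTop` and `unshiftBottom` solve `AltRel (n + 3)` for the last and for the first letter.
def shiftTop : FreeGroup (Fin (n + 2)) :=
  if Even n then
    (evenProd (freeGen n) (n / 2 + 1))⁻¹ * evenProd (fun i => freeGen n (i + 1)) (n / 2 + 1)
  else
    (evenProd (fun i => freeGen n (i + 1)) (n / 2 + 1))⁻¹ * evenProd (freeGen n) (n / 2 + 2)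

def unshiftBottom : FreeGroup (Fin (n + 2)) :=
  evenProd (freeGen n) ((n + 3) / 2) * (evenProd (fun i => freeGen n (i + 1)) ((n + 2) / 2))⁻¹

def extendTop (i : ℕ) : FreeGroup (Fin (n + 2)) :=
  if i < n + 2 then freeGen n i else shiftTop n

def extendBottom : ℕ → FreeGroup (Fin (n + 2))
  | 0 => unshiftBottom n
  | i + 1 => freeGen n i

theorem extendTop_of_lt {i : ℕ} (hi : i < n + 2) : extendTop n i = freeGen n i := if_pos hi

theorem altRel_extendTop : AltRel (n + 3) (extendTop n) := by
  have hodd : ∀ j, 2 * j ≤ n + 2 →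
      evenProd (fun i => extendTop n (i + 1)) j = evenProd (fun i => freeGen n (i + 1)) j :=
    fun j hj => evenProd_congr fun i hi => extendTop_of_lt n (by omega)
  have heven : ∀ j, 2 * j ≤ n + 3 → evenProd (extendTop n) j = evenProd (freeGen n) j :=
    fun j hj => evenProd_congr fun i hi => extendTop_of_lt n (by omega)
  have htop : extendTop n (n + 2) = shiftTop n := if_neg (lt_irrefl _)
  obtain ⟨j, rfl | rfl⟩ := Nat.even_or_odd' n
  · rw [AltRel, show (2 * j + 3) / 2 = j + 1 by omega, show (2 * j + 3 + 1) / 2 = j + 2 by omega,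
      evenProd_succ (extendTop _), heven (j + 1) (by omega), hodd (j + 1) (by omega),
      show 2 * (j + 1) = 2 * j + 2 by ring, htop, shiftTop, if_pos (even_two_mul j),
      show 2 * j / 2 = j by omega, mul_inv_cancel_left]
  · rw [AltRel, show (2 * j + 1 + 3) / 2 = j + 2 by omega,
      show (2 * j + 1 + 3 + 1) / 2 = j + 2 by omega, evenProd_succ (fun i => extendTop _ (i + 1)),
      heven (j + 2) (by omega), hodd (j + 1) (by omega),
      show 2 * (j + 1) + 1 = 2 * j + 1 + 2 by ring, htop, shiftTop,
      if_neg (Nat.not_even_two_mul_add_one j), show (2 * j + 1) / 2 = j by omega,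
      mul_inv_cancel_left]

theorem altRel_extendBottom : AltRel (n + 3) (extendBottom n) :=
  (altRel_succ_iff_apply_zero _ _).2 rfl

def shiftHom : FreeGroup (Fin (n + 2)) →* FreeGroup (Fin (n + 2)) :=
  FreeGroup.lift fun v => extendTop n (v + 1)

def unshiftHom : FreeGroup (Fin (n + 2)) →* FreeGroup (Fin (n + 2)) :=
  FreeGroup.lift fun v => extendBottom n v

theorem shiftHom_freeGen {i : ℕ} (hi : i < n + 2) :
    shiftHom n (freeGen n i) = extendTop n (i + 1) := by
  rw [shiftHom, freeGen, FreeGroup.lift_apply_of, Fin.val_ofNat, Nat.mod_eq_of_lt hi]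

theorem unshiftHom_freeGen {i : ℕ} (hi : i < n + 2) :
    unshiftHom n (freeGen n i) = extendBottom n i := by
  rw [unshiftHom, freeGen, FreeGroup.lift_apply_of, Fin.val_ofNat, Nat.mod_eq_of_lt hi]

theorem unshiftHom_extendTop {i : ℕ} (hi : i ≤ n + 2) :
    unshiftHom n (extendTop n i) = extendBottom n i := by
  have hlow : ∀ i < n + 2, unshiftHom n (extendTop n i) = extendBottom n i := fun i hi => by
    rw [extendTop_of_lt n hi, unshiftHom_freeGen n hi]
  rcases hi.lt_or_eq with hi | rfl
  · exact hlow i hi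
  · exact ((altRel_extendTop n).map (unshiftHom n)).last_unique (altRel_extendBottom n) hlow

theorem shiftHom_extendBottom {i : ℕ} (hi : i ≤ n + 2) :
    shiftHom n (extendBottom n i) = extendTop n i := by
  have hhigh : ∀ i, 0 < i → i ≤ n + 2 → shiftHom n (extendBottom n i) = extendTop n i := by
    rintro (_ | i) hpos hi
    · exact absurd hpos (lt_irrefl 0)
    · exact shiftHom_freeGen n (by omega)
  rcases i with _ | i
  · exact ((altRel_extendBottom n).map (shiftHom n)).head_unique (altRel_extendTop n) hhigh
  · exact hhigh _ i.succ_pos hi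

def shift : MulAut (FreeGroup (Fin (n + 2))) :=
  MonoidHom.toMulEquiv (shiftHom n) (unshiftHom n)
    (FreeGroup.ext_hom _ _ fun v => by
      rw [MonoidHom.comp_apply, ← freeGen_val, shiftHom_freeGen n v.2,
        unshiftHom_extendTop n (by omega)]
      rfl)
    (FreeGroup.ext_hom _ _ fun v => by
      rw [MonoidHom.comp_apply, ← freeGen_val, unshiftHom_freeGen n v.2,
        shiftHom_extendBottom n (by omega), extendTop_of_lt n v.2]
      rfl)

theorem shift_pow_freeGen_zero {i : ℕ} (hi : i ≤ n + 2) :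
    (shift n ^ i) (freeGen n 0) = extendTop n i := by
  induction i with
  | zero => rw [pow_zero, extendTop_of_lt n (by omega)]; rfl
  | succ i ih =>
    rw [pow_succ', MulAut.mul_apply, ih (by omega), extendTop_of_lt n (i := i) (by omega)]
    exact shiftHom_freeGen n (by omega)

open SemidirectProduct

abbrev FreeByCyclic : Type :=
  FreeGroup (Fin (n + 2)) ⋊[zpowersHom _ (shift n)] Multiplicative ℤ

def stableLetter : FreeByCyclic n := inr (Multiplicative.ofAdd 1)

theorem schreierGen_stableLetter (i : ℕ) :
    schreierGen (stableLetter n) (inl (freeGen n 0) * stableLetter n) i =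
      inl ((shift n ^ i) (freeGen n 0)) :=
  schreierGen_inr_one _ _ _

def toFreeByCyclic : DihedralArtinGroup (n + 3) →* FreeByCyclic n :=
  lift (stableLetter n) (inl (freeGen n 0) * stableLetter n) <| by
    rw [altProd_comm_iff, altRel_congr fun i hi => by
      rw [schreierGen_stableLetter, shift_pow_freeGen_zero n (by omega)]]
    exact (altRel_extendTop n).map inl

theorem toFreeByCyclic_schreierGen {i : ℕ} (hi : i ≤ n + 2) :
    toFreeByCyclic n (schreierGen (x₁ _) (x₂ _) i) = inl (extendTop n i) := by
  rw [map_schreierGen, toFreeByCyclic, lift_x₁, lift_x₂, schreierGen_stableLetter,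
    shift_pow_freeGen_zero n hi]

def freeToArtin : FreeGroup (Fin (n + 2)) →* DihedralArtinGroup (n + 3) :=
  FreeGroup.lift fun v => schreierGen (x₁ _) (x₂ _) v

theorem freeToArtin_extendTop {i : ℕ} (hi : i ≤ n + 2) :
    freeToArtin n (extendTop n i) = schreierGen (x₁ _) (x₂ _) i := by
  have hlow : ∀ i < n + 2, freeToArtin n (extendTop n i) = schreierGen (x₁ _) (x₂ _) i :=
    fun i hi => by
      rw [extendTop_of_lt n hi, freeToArtin, freeGen, FreeGroup.lift_apply_of, Fin.val_ofNat,
        Nat.mod_eq_of_lt hi]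
  rcases hi.lt_or_eq with hi | rfl
  · exact hlow i hi
  · exact ((altRel_extendTop n).map (freeToArtin n)).last_unique
      ((altProd_comm_iff _ _ _).1 (altProd_x₁_x₂ _)) hlow

theorem freeToArtin_shift (v : FreeGroup (Fin (n + 2))) :
    freeToArtin n (shift n v) = MulAut.conj (x₁ _) (freeToArtin n v) := by
  suffices (freeToArtin n).comp (shiftHom n) =
      (MulAut.conj (x₁ (n + 3))).toMonoidHom.comp (freeToArtin n) from
    DFunLike.congr_fun this v
  refine FreeGroup.ext_hom _ _ fun v => ?_
  rw [MonoidHom.comp_apply, MonoidHom.comp_apply, ← freeGen_val, shiftHom_freeGen n v.2,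
    ← extendTop_of_lt n v.2, freeToArtin_extendTop n (by omega),
    freeToArtin_extendTop n (by omega), schreierGen_succ]
  rfl

def ofFreeByCyclic : FreeByCyclic n →* DihedralArtinGroup (n + 3) :=
  SemidirectProduct.lift (freeToArtin n) (zpowersHom _ (x₁ _)) fun k => by
    refine MonoidHom.ext fun v => ?_
    simpa [map_zpow] using (freeToArtin n).map_zpow_apply (freeToArtin_shift n) k.toAdd v

theorem ofFreeByCyclic_comp_toFreeByCyclic :
    (ofFreeByCyclic n).comp (toFreeByCyclic n) = MonoidHom.id _ := by
  have hx₁ : ofFreeByCyclic n (stableLetter n) = x₁ _ := by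
    rw [ofFreeByCyclic, stableLetter, lift_inr, zpowersHom_apply, toAdd_ofAdd, zpow_one]
  have hgen : ofFreeByCyclic n (inl (freeGen n 0)) = x₂ _ * (x₁ _)⁻¹ := by
    rw [ofFreeByCyclic, lift_inl, ← extendTop_of_lt n (by omega),
      freeToArtin_extendTop n (by omega), schreierGen, pow_zero, one_mul, pow_one]
  refine hom_ext ?_ ?_
  · rw [MonoidHom.comp_apply, toFreeByCyclic, lift_x₁, hx₁, MonoidHom.id_apply]
  · rw [MonoidHom.comp_apply, toFreeByCyclic, lift_x₂, map_mul, hx₁, hgen,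
      inv_mul_cancel_right, MonoidHom.id_apply]

theorem eq_one_of_mem_center {z : DihedralArtinGroup (n + 3)} (hz : z ∈ Subgroup.center _)
    (hright : rightHom (toFreeByCyclic n z) = 1) : z = 1 := by
  obtain ⟨w, hw⟩ : toFreeByCyclic n z ∈ (inl : _ →* FreeByCyclic n).range := by
    rwa [range_inl_eq_ker_rightHom]
  have hcomm : ∀ i < 2, Commute (freeGen n i) w := fun i hi => by
    have h := congrArg (toFreeByCyclic n)
      (Subgroup.mem_center_iff.1 hz (schreierGen (x₁ _) (x₂ _) i))
    rw [map_mul, map_mul, toFreeByCyclic_schreierGen n (by omega), ← hw,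
      extendTop_of_lt n (by omega), ← map_mul, ← map_mul] at h
    exact inl_injective h
  have hw1 : w = 1 := FreeGroup.eq_one_of_commute_of_ne (by simp [Fin.ext_iff])
    (hcomm 0 (by omega)) (hcomm 1 (by omega))
  have := DFunLike.congr_fun (ofFreeByCyclic_comp_toFreeByCyclic n) z
  rwa [MonoidHom.comp_apply, ← hw, hw1, map_one, map_one, MonoidHom.id_apply, eq_comm] at this

end DihedralArtinGroup

theorem not_conj_central_translate_general (m : ℕ) (hm : 3 ≤ m) (g z : DihedralArtinGroup m)
    (hz : z ∈ Subgroup.center (DihedralArtinGroup m)) (hz1 : z ≠ 1) :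
    ¬ IsConj g (g * z) := by
  obtain ⟨n, rfl⟩ : ∃ n, m = n + 3 := ⟨m - 3, by omega⟩
  intro hconj
  have hright := map_eq_one_of_isConj_mul
    (SemidirectProduct.rightHom.comp (DihedralArtinGroup.toFreeByCyclic n)) hconj
  exact hz1 (DihedralArtinGroup.eq_one_of_mem_center n hz hright)

/-- For `m ≥ 3`, if `g ∈ G(m)` is not central and `z ≠ 1` is central,
then `g` and `gz` are not conjugate in `G(m)`. -/
theorem not_conj_central_translate (m : ℕ) (hm : 3 ≤ m) (g z : DihedralArtinGroup m)
    (hg : g ∉ Subgroup.center (DihedralArtinGroup m))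
    (hz : z ∈ Subgroup.center (DihedralArtinGroup m)) (hz1 : z ≠ 1) :
    ¬ IsConj g (g * z) :=
  not_conj_central_translate_general m hm g z hz hz1
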